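/- arXiv:2507.20702 — 5 statements merged into one kernel-verified Lean document; each statement's English description precedes it below -/
import Mathlib

section
/- The quantity p = 0 is optimal (maximizes Z over [0, P_h]) if and only if λ ≥ η·π_gray + η·π_green·Σ_{s : P_s > 0} ρ_s. In particular, if P_1 = 0 this threshold equals η·π_gray + η·π_green·(1 − ρ_1), and if P_1 > 0 it equals η·π_gray + η·π_green. -/
open Classical

/-- Expected-profit objective Z(p) = Σ_s ρ_s·(η·π_gray·p + η·π_green·min(p, P_s)) − λ·p. -/
noncomputable def Z (S : ℕ) (ρ P : ℕ → ℝ) (eta pgray pgreen lam p : ℝ) : ℝ :=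
  ∑ s ∈ Finset.Icc 1 S, ρ s * (eta * pgray * p + eta * pgreen * min p (P s)) - lam * p

/-- p = 0 maximizes Z over [0, P_h] iff
λ ≥ η·π_gray + η·π_green·Σ_{s : P_s > 0} ρ_s; in particular, if P_1 = 0 this threshold
equals η·π_gray + η·π_green·(1 − ρ_1), and if P_1 > 0 it equals η·π_gray + η·π_green. -/
theorem stmt_6 (S : ℕ) (hS : 1 ≤ S) (ρ P : ℕ → ℝ) (Ph eta pgray pgreen lam : ℝ)
    (hρ : ∀ s ∈ Finset.Icc 1 S, 0 < ρ s)
    (hsum : ∑ s ∈ Finset.Icc 1 S, ρ s = 1)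
    (hP1 : 0 ≤ P 1)
    (hmono : ∀ s t : ℕ, 1 ≤ s → s < t → t ≤ S → P s < P t)
    (hPS : P S ≤ Ph)
    (hPh : 0 < Ph) (heta : 0 < eta) (hgray : 0 < pgray) (hgreen : 0 < pgreen) :
    ((∀ p ∈ Set.Icc (0 : ℝ) Ph,
        Z S ρ P eta pgray pgreen lam p ≤ Z S ρ P eta pgray pgreen lam 0)
      ↔ eta * pgray
          + eta * pgreen * ∑ s ∈ (Finset.Icc 1 S).filter (fun s => 0 < P s), ρ s ≤ lam)
    ∧
    (P 1 = 0 →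
      eta * pgray + eta * pgreen * ∑ s ∈ (Finset.Icc 1 S).filter (fun s => 0 < P s), ρ s
        = eta * pgray + eta * pgreen * (1 - ρ 1))
    ∧
    (0 < P 1 →
      eta * pgray + eta * pgreen * ∑ s ∈ (Finset.Icc 1 S).filter (fun s => 0 < P s), ρ s
        = eta * pgray + eta * pgreen) := by
  set F := (Finset.Icc 1 S).filter (fun s => 0 < P s) with hF
  set W := ∑ s ∈ F, ρ s with hW
  have hP0 : ∀ s ∈ Finset.Icc 1 S, 0 ≤ P s := by
    intro s hs
    rw [Finset.mem_Icc] at hs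
    rcases eq_or_lt_of_le hs.1 with h | h
    · exact h ▸ hP1
    · exact le_of_lt (lt_of_le_of_lt hP1 (hmono 1 s le_rfl h hs.2))
  have hZ0 : Z S ρ P eta pgray pgreen lam 0 = 0 := by
    unfold Z
    have h0 : ∀ s ∈ Finset.Icc 1 S,
        ρ s * (eta * pgray * 0 + eta * pgreen * min 0 (P s)) = 0 := by
      intro s hs; rw [min_eq_left (hP0 s hs)]; ring
    rw [Finset.sum_congr rfl h0]; simp
  -- the key sum identity
  have hsum2 : ∀ p : ℝ,
      ∑ s ∈ Finset.Icc 1 S, ρ s * (eta * pgray * p + eta * pgreen * (if 0 < P s then p else 0))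
        = (eta * pgray + eta * pgreen * W - lam) * p + lam * p := by
    intro p
    have h0 : ∀ s ∈ Finset.Icc 1 S,
        ρ s * (eta * pgray * p + eta * pgreen * (if 0 < P s then p else 0))
          = ρ s * (eta * pgray * p) + (if 0 < P s then ρ s * (eta * pgreen * p) else 0) := by
      intro s _; split <;> ring
    rw [Finset.sum_congr rfl h0, Finset.sum_add_distrib, ← Finset.sum_mul, hsum,
      ← Finset.sum_filter, ← hF, ← Finset.sum_mul, ← hW]
    ring
  have hub : ∀ p : ℝ, 0 ≤ p →
      Z S ρ P eta pgray pgreen lam p ≤ (eta * pgray + eta * pgreen * W - lam) * p := by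
    intro p hp
    unfold Z
    have h1 : ∑ s ∈ Finset.Icc 1 S, ρ s * (eta * pgray * p + eta * pgreen * min p (P s))
        ≤ ∑ s ∈ Finset.Icc 1 S,
            ρ s * (eta * pgray * p + eta * pgreen * (if 0 < P s then p else 0)) := by
      apply Finset.sum_le_sum
      intro s hs
      apply mul_le_mul_of_nonneg_left _ (le_of_lt (hρ s hs))
      apply add_le_add_right
      apply mul_le_mul_of_nonneg_left _ (le_of_lt (mul_pos heta hgreen))
      split
      · exact min_le_left _ _
      · next h =>
        have : P s = 0 := le_antisymm (not_lt.mp h) (hP0 s hs)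
        rw [this, min_eq_right hp]
    have h2 := hsum2 p
    linarith
  have heq : ∀ p : ℝ, 0 ≤ p → (∀ s ∈ F, p ≤ P s) →
      Z S ρ P eta pgray pgreen lam p = (eta * pgray + eta * pgreen * W - lam) * p := by
    intro p hp hpF
    unfold Z
    have h1 : ∀ s ∈ Finset.Icc 1 S, ρ s * (eta * pgray * p + eta * pgreen * min p (P s))
        = ρ s * (eta * pgray * p + eta * pgreen * (if 0 < P s then p else 0)) := by
      intro s hs
      congr 2
      split
      · next h => rw [min_eq_left (hpF s (Finset.mem_filter.mpr ⟨hs, h⟩))]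
      · next h =>
        have : P s = 0 := le_antisymm (not_lt.mp h) (hP0 s hs)
        rw [this, min_eq_right hp]
    rw [Finset.sum_congr rfl h1, hsum2 p]
    ring
  refine ⟨⟨?_, ?_⟩, ?_, ?_⟩
  · -- forward
    intro hopt
    obtain ⟨q, hq0, hqPh, hqF⟩ : ∃ q, 0 < q ∧ q ≤ Ph ∧ ∀ s ∈ F, q ≤ P s := by
      by_cases hFe : F.Nonempty
      · set m := F.min' hFe with hm
        have hmF : m ∈ F := F.min'_mem hFe
        have hmI : m ∈ Finset.Icc 1 S := (Finset.mem_filter.mp hmF).1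
        have hmpos : 0 < P m := (Finset.mem_filter.mp hmF).2
        refine ⟨min Ph (P m), lt_min hPh hmpos, min_le_left _ _, ?_⟩
        intro s hsF
        have hms : m ≤ s := F.min'_le s hsF
        have hsI := (Finset.mem_filter.mp hsF).1
        rcases eq_or_lt_of_le hms with h | h
        · rw [← h]; exact min_le_right _ _
        · have hlt : P m < P s :=
            hmono m s (Finset.mem_Icc.mp hmI).1 h (Finset.mem_Icc.mp hsI).2
          exact (min_le_right _ _).trans hlt.le
      · exact ⟨Ph, hPh, le_rfl, fun s hs => absurd ⟨s, hs⟩ hFe⟩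
    have h1 := hopt q ⟨hq0.le, hqPh⟩
    rw [hZ0, heq q hq0.le hqF] at h1
    nlinarith
  · -- backward
    intro hlam p hp
    rw [hZ0]
    have h1 := hub p hp.1
    nlinarith [hp.1, hp.2]
  · -- P 1 = 0
    intro hP1eq
    have hnot : (Finset.Icc 1 S).filter (fun s => ¬ 0 < P s) = {1} := by
      ext s
      simp only [Finset.mem_filter, Finset.mem_Icc, Finset.mem_singleton]
      constructor
      · rintro ⟨⟨h1, h2⟩, hnp⟩
        by_contra hne
        have hlt : 1 < s := lt_of_le_of_ne h1 (Ne.symm hne)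
        exact hnp (hP1eq ▸ hmono 1 s le_rfl hlt h2)
      · rintro rfl
        exact ⟨⟨le_rfl, hS⟩, by rw [hP1eq]; exact lt_irrefl 0⟩
    have hsplit := Finset.sum_filter_add_sum_filter_not (Finset.Icc 1 S)
      (fun s => 0 < P s) ρ
    rw [hnot, Finset.sum_singleton, hsum, ← hF, ← hW] at hsplit
    have : W = 1 - ρ 1 := by linarith
    rw [this]
  · -- 0 < P 1
    intro hP1pos
    have hall : F = Finset.Icc 1 S := by
      rw [hF]
      apply Finset.filter_true_of_mem
      intro s hs
      rw [Finset.mem_Icc] at hs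
      rcases eq_or_lt_of_le hs.1 with h | h
      · exact h ▸ hP1pos
      · exact lt_of_le_of_lt hP1 (hmono 1 s le_rfl h hs.2)
    have : W = 1 := by rw [hW, hall, hsum]
    rw [this, mul_one]
end

section
/- The quantity p = P_h is optimal (maximizes Z over [0, P_h]) if and only if λ ≤ η·π_gray + η·π_green·Σ_{s : P_s ≥ P_h} ρ_s. In particular, if P_S < P_h this threshold equals η·π_gray, and if P_S = P_h it equals η·π_gray + η·π_green·ρ_S. -/
open Classical

/-- p = P_h maximizes Z over [0, P_h] iff
λ ≤ η·π_gray + η·π_green·Σ_{s : P_s ≥ P_h} ρ_s; in particular, if P_S < P_h this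
threshold equals η·π_gray, and if P_S = P_h it equals η·π_gray + η·π_green·ρ_S. -/
theorem stmt_7 (S : ℕ) (hS : 1 ≤ S) (ρ P : ℕ → ℝ) (Ph eta pgray pgreen lam : ℝ)
    (hρ : ∀ s ∈ Finset.Icc 1 S, 0 < ρ s)
    (hsum : ∑ s ∈ Finset.Icc 1 S, ρ s = 1)
    (hP1 : 0 ≤ P 1)
    (hmono : ∀ s t : ℕ, 1 ≤ s → s < t → t ≤ S → P s < P t)
    (hPS : P S ≤ Ph)
    (hPh : 0 < Ph) (heta : 0 < eta) (hgray : 0 < pgray) (hgreen : 0 < pgreen) :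
    ((∀ p ∈ Set.Icc (0 : ℝ) Ph,
        Z S ρ P eta pgray pgreen lam p ≤ Z S ρ P eta pgray pgreen lam Ph)
      ↔ lam ≤ eta * pgray
          + eta * pgreen * ∑ s ∈ (Finset.Icc 1 S).filter (fun s => Ph ≤ P s), ρ s)
    ∧
    (P S < Ph →
      eta * pgray + eta * pgreen * ∑ s ∈ (Finset.Icc 1 S).filter (fun s => Ph ≤ P s), ρ s
        = eta * pgray)
    ∧
    (P S = Ph →
      eta * pgray + eta * pgreen * ∑ s ∈ (Finset.Icc 1 S).filter (fun s => Ph ≤ P s), ρ s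
        = eta * pgray + eta * pgreen * ρ S) := by
  have hSmem : S ∈ Finset.Icc 1 S := by simp [hS]
  have hPleS : ∀ s ∈ Finset.Icc 1 S, P s ≤ P S := by
    intro s hs
    simp only [Finset.mem_Icc] at hs
    rcases eq_or_lt_of_le hs.2 with h | h
    · rw [h]
    · exact (hmono s S hs.1 h le_rfl).le
  have hPle : ∀ s ∈ Finset.Icc 1 S, P s ≤ Ph := fun s hs => (hPleS s hs).trans hPS
  have hPnn : ∀ s ∈ Finset.Icc 1 S, 0 ≤ P s := by
    intro s hs
    simp only [Finset.mem_Icc] at hs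
    rcases eq_or_lt_of_le hs.1 with h | h
    · rw [← h]; exact hP1
    · exact hP1.trans (hmono 1 s le_rfl h hs.2).le
  have hfilt_lt : P S < Ph →
      (Finset.Icc 1 S).filter (fun s => Ph ≤ P s) = ∅ := by
    intro h
    apply Finset.filter_false_of_mem
    intro s hs
    exact not_le.mpr (lt_of_le_of_lt (hPleS s hs) h)
  have hfilt_eq : P S = Ph →
      (Finset.Icc 1 S).filter (fun s => Ph ≤ P s) = {S} := by
    intro h
    ext s
    simp only [Finset.mem_filter, Finset.mem_singleton, Finset.mem_Icc]
    constructor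
    · rintro ⟨⟨h1, h2⟩, h3⟩
      by_contra hne
      have : P s < P S := hmono s S h1 (lt_of_le_of_ne h2 hne) le_rfl
      rw [h] at this; linarith
    · rintro rfl
      exact ⟨⟨hS, le_rfl⟩, h.ge⟩
  have hZ : ∀ p, Z S ρ P eta pgray pgreen lam p =
      eta * pgray * p + eta * pgreen * (∑ s ∈ Finset.Icc 1 S, ρ s * min p (P s)) - lam * p := by
    intro p
    unfold Z
    have : ∑ s ∈ Finset.Icc 1 S, ρ s * (eta * pgray * p + eta * pgreen * min p (P s))
        = (∑ s ∈ Finset.Icc 1 S, ρ s) * (eta * pgray * p)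
          + eta * pgreen * ∑ s ∈ Finset.Icc 1 S, ρ s * min p (P s) := by
      rw [Finset.sum_mul, Finset.mul_sum, ← Finset.sum_add_distrib]
      apply Finset.sum_congr rfl
      intros; ring
    rw [this, hsum]; ring
  refine ⟨?_, ?_, ?_⟩
  · constructor
    · intro H
      rcases lt_or_eq_of_le hPS with hlt | heq
      · rw [hfilt_lt hlt]
        simp only [Finset.sum_empty, mul_zero, add_zero]
        have h0S : 0 ≤ P S := hPnn S hSmem
        have hH := H (P S) ⟨h0S, hPS⟩
        rw [hZ, hZ] at hH
        have hX : ∑ s ∈ Finset.Icc 1 S, ρ s * min (P S) (P s)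
            = ∑ s ∈ Finset.Icc 1 S, ρ s * min Ph (P s) := by
          apply Finset.sum_congr rfl
          intro s hs
          rw [min_eq_right (hPleS s hs), min_eq_right (hPle s hs)]
        rw [hX] at hH
        nlinarith [sub_pos.mpr hlt]
      · rw [hfilt_eq heq]
        simp only [Finset.sum_singleton]
        set p₀ : ℝ := if S = 1 then (0:ℝ) else P (S-1) with hp₀def
        have hp₀nn : 0 ≤ p₀ := by
          rw [hp₀def]
          split_ifs with h1
          · exact le_refl 0
          · exact hPnn (S-1) (by simp only [Finset.mem_Icc]; omega)
        have hp₀lt : p₀ < Ph := by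
          rw [hp₀def]
          split_ifs with h1
          · exact hPh
          · have := hmono (S-1) S (by omega) (by omega) le_rfl
            linarith [heq ▸ this]
        have hp₀ge : ∀ s ∈ Finset.Icc 1 S, s ≠ S → P s ≤ p₀ := by
          intro s hs hne
          simp only [Finset.mem_Icc] at hs
          rw [hp₀def]
          split_ifs with h1
          · exact absurd (show s = S by omega) hne
          · rcases eq_or_lt_of_le (show s ≤ S - 1 by omega) with h | h
            · rw [h]
            · exact (hmono s (S-1) hs.1 h (by omega)).le
        have hH := H p₀ ⟨hp₀nn, hp₀lt.le⟩
        rw [hZ, hZ] at hH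
        have key : (∑ s ∈ Finset.Icc 1 S, ρ s * min Ph (P s))
            - (∑ s ∈ Finset.Icc 1 S, ρ s * min p₀ (P s)) = ρ S * (Ph - p₀) := by
          rw [← Finset.sum_sub_distrib]
          rw [Finset.sum_eq_single S]
          · rw [← heq, min_self, min_eq_left (heq ▸ hp₀lt.le)]
            ring
          · intro s hs hne
            rw [min_eq_right (hPle s hs), min_eq_right (hp₀ge s hs hne)]
            ring
          · intro h; exact absurd hSmem h
        nlinarith [sub_pos.mpr hp₀lt, mul_pos heta hgreen]
    · intro hlam p hp
      rw [hZ, hZ]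
      set T := ∑ s ∈ (Finset.Icc 1 S).filter (fun s => Ph ≤ P s), ρ s with hT
      set A := ∑ s ∈ Finset.Icc 1 S, ρ s * min p (P s) with hA
      set B := ∑ s ∈ Finset.Icc 1 S, ρ s * min Ph (P s) with hB
      have hD : T * (Ph - p) ≤ B - A := by
        rw [hB, hA, ← Finset.sum_sub_distrib]
        have step1 : T * (Ph - p) = ∑ s ∈ (Finset.Icc 1 S).filter (fun s => Ph ≤ P s),
            (ρ s * min Ph (P s) - ρ s * min p (P s)) := by
          rw [hT, Finset.sum_mul]
          apply Finset.sum_congr rfl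
          intro s hs
          simp only [Finset.mem_filter] at hs
          have hPs : P s = Ph := le_antisymm (hPle s hs.1) hs.2
          rw [hPs, min_self, min_eq_left hp.2]
          ring
        rw [step1]
        apply Finset.sum_le_sum_of_subset_of_nonneg (Finset.filter_subset _ _)
        intro s hs _
        have : min p (P s) ≤ min Ph (P s) := min_le_min hp.2 le_rfl
        have := (hρ s hs).le
        nlinarith
      have hT0 : 0 ≤ T := Finset.sum_nonneg fun s hs =>
        (hρ s (Finset.filter_subset _ _ hs)).le
      have h1 : 0 ≤ (eta * pgray + eta * pgreen * T - lam) * (Ph - p) :=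
        mul_nonneg (by linarith) (by linarith [hp.2])
      have h2 : 0 ≤ eta * pgreen * ((B - A) - T * (Ph - p)) :=
        mul_nonneg (mul_pos heta hgreen).le (by linarith)
      nlinarith [h1, h2]
  · intro h
    rw [hfilt_lt h]
    simp
  · intro h
    rw [hfilt_eq h]
    simp
end

section
/- Let s ∈ {1,…,S} be a scenario index with 0 < P_s < P_h. The quantity p = P_s is optimal (maximizes Z over [0, P_h]) if and only if η·π_gray + η·π_green·Σ_{i = s+1}^{S} ρ_i ≤ λ ≤ η·π_gray + η·π_green·Σ_{i = s}^{S} ρ_i. -/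
set_option maxHeartbeats 1000000 in
/-- for a scenario index s with 0 < P_s < P_h, the quantity p = P_s
maximizes Z over [0, P_h] iff
η·π_gray + η·π_green·Σ_{i=s+1}^S ρ_i ≤ λ ≤ η·π_gray + η·π_green·Σ_{i=s}^S ρ_i. -/
theorem stmt_8 (S : ℕ) (hS : 1 ≤ S) (ρ P : ℕ → ℝ) (Ph eta pgray pgreen lam : ℝ)
    (hρ : ∀ s ∈ Finset.Icc 1 S, 0 < ρ s)
    (hsum : ∑ s ∈ Finset.Icc 1 S, ρ s = 1)
    (hP1 : 0 ≤ P 1)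
    (hmono : ∀ s t : ℕ, 1 ≤ s → s < t → t ≤ S → P s < P t)
    (hPS : P S ≤ Ph)
    (hPh : 0 < Ph) (heta : 0 < eta) (hgray : 0 < pgray) (hgreen : 0 < pgreen)
    (s : ℕ) (hs : s ∈ Finset.Icc 1 S) (hPs0 : 0 < P s) (hPsh : P s < Ph) :
    (∀ p ∈ Set.Icc (0 : ℝ) Ph,
        Z S ρ P eta pgray pgreen lam p ≤ Z S ρ P eta pgray pgreen lam (P s))
      ↔ (eta * pgray + eta * pgreen * ∑ i ∈ Finset.Icc (s + 1) S, ρ i ≤ lam ∧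
          lam ≤ eta * pgray + eta * pgreen * ∑ i ∈ Finset.Icc s S, ρ i) := by
  obtain ⟨hs1, hsS⟩ := Finset.mem_Icc.mp hs
  have hb : (0:ℝ) < eta * pgreen := by positivity
  -- rewrite Z
  have hZ : ∀ q : ℝ, Z S ρ P eta pgray pgreen lam q
      = (eta * pgray - lam) * q
        + eta * pgreen * ∑ i ∈ Finset.Icc 1 S, ρ i * min q (P i) := by
    intro q
    unfold Z
    have h1 : ∑ i ∈ Finset.Icc 1 S, ρ i * (eta * pgray * q + eta * pgreen * min q (P i))
        = (∑ i ∈ Finset.Icc 1 S, ρ i) * (eta * pgray * q)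
          + eta * pgreen * ∑ i ∈ Finset.Icc 1 S, ρ i * min q (P i) := by
      rw [Finset.sum_mul, Finset.mul_sum, ← Finset.sum_add_distrib]
      exact Finset.sum_congr rfl fun i _ => by ring
    rw [h1, hsum]; ring
  -- weak monotonicity
  have hPle : ∀ i j : ℕ, 1 ≤ i → i ≤ j → j ≤ S → P i ≤ P j := by
    intro i j h1 h2 h3
    rcases eq_or_lt_of_le h2 with h | h
    · rw [h]
    · exact (hmono i j h1 h h3).le
  -- P i ≥ 0 for valid i
  have hPpos : ∀ i : ℕ, 1 ≤ i → i ≤ S → 0 ≤ P i := fun i h1 h2 =>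
    le_trans hP1 (hPle 1 i le_rfl h1 h2)
  -- filter identities
  have hfil1 : (Finset.Icc 1 S).filter (fun i => s ≤ i) = Finset.Icc s S := by
    ext i; simp only [Finset.mem_filter, Finset.mem_Icc]; omega
  have hfil2 : (Finset.Icc 1 S).filter (fun i => s + 1 ≤ i) = Finset.Icc (s + 1) S := by
    ext i; simp only [Finset.mem_filter, Finset.mem_Icc]; omega
  constructor
  · intro hopt
    constructor
    · -- lower bound via a test point just above P s
      set Q : ℝ := if s = S then Ph else P (s + 1) with hQdef
      have hQ1 : P s < Q := by
        by_cases h : s = S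
        · simp only [hQdef, if_pos h]; exact hPsh
        · simp only [hQdef, if_neg h]
          exact hmono s (s + 1) hs1 (Nat.lt_succ_self s) (by omega)
      have hQ2 : Q ≤ Ph := by
        by_cases h : s = S
        · simp [hQdef, h]
        · simp only [hQdef, if_neg h]
          exact le_trans (hPle (s + 1) S (by omega) (by omega) le_rfl) hPS
      set p1 : ℝ := (P s + Q) / 2 with hp1def
      have hp1a : P s < p1 := by simp only [hp1def]; linarith
      have hp1b : p1 < Q := by simp only [hp1def]; linarith
      have hp1c : 0 ≤ p1 := by linarith
      have hp1d : p1 ≤ Ph := by linarith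
      have hterm : ∀ i ∈ Finset.Icc 1 S,
          ρ i * min p1 (P i) - ρ i * min (P s) (P i)
            = if s + 1 ≤ i then ρ i * (p1 - P s) else 0 := by
        intro i hi
        obtain ⟨hi1, hi2⟩ := Finset.mem_Icc.mp hi
        by_cases hc : s + 1 ≤ i
        · have hQle : Q ≤ P i := by
            by_cases h : s = S
            · omega
            · simp only [hQdef, if_neg h]
              exact hPle (s + 1) i (by omega) hc hi2
          rw [if_pos hc, min_eq_left (le_trans hp1b.le hQle),
            min_eq_left (hPle s i hs1 (by omega) hi2)]
          ring
        · have hile : i ≤ s := by omega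
          have h1 : P i ≤ P s := hPle i s hi1 hile hsS
          rw [if_neg hc, min_eq_right (le_trans h1 hp1a.le), min_eq_right h1]
          ring
      have hdiff : (∑ i ∈ Finset.Icc 1 S, ρ i * min p1 (P i))
          - (∑ i ∈ Finset.Icc 1 S, ρ i * min (P s) (P i))
          = (∑ i ∈ Finset.Icc (s + 1) S, ρ i) * (p1 - P s) := by
        rw [← Finset.sum_sub_distrib]
        rw [Finset.sum_congr rfl hterm, ← Finset.sum_filter, hfil2, Finset.sum_mul]
      have hO := hopt p1 ⟨hp1c, hp1d⟩
      rw [hZ, hZ] at hO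
      nlinarith [hO, hdiff, hp1a, hb]
    · -- upper bound via a test point just below P s
      set L : ℝ := if s = 1 then 0 else P (s - 1) with hLdef
      have hL1 : L < P s := by
        by_cases h : s = 1
        · simp only [hLdef, if_pos h]; exact hPs0
        · simp only [hLdef, if_neg h]
          exact hmono (s - 1) s (by omega) (by omega) hsS
      have hL0 : 0 ≤ L := by
        by_cases h : s = 1
        · simp [hLdef, h]
        · simp only [hLdef, if_neg h]
          exact hPpos (s - 1) (by omega) (by omega)
      set p0 : ℝ := (L + P s) / 2 with hp0def
      have hp0a : p0 < P s := by simp only [hp0def]; linarith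
      have hp0b : L < p0 := by simp only [hp0def]; linarith
      have hp0c : 0 ≤ p0 := by linarith
      have hp0d : p0 ≤ Ph := by linarith
      have hterm : ∀ i ∈ Finset.Icc 1 S,
          ρ i * min p0 (P i) - ρ i * min (P s) (P i)
            = if s ≤ i then ρ i * (p0 - P s) else 0 := by
        intro i hi
        obtain ⟨hi1, hi2⟩ := Finset.mem_Icc.mp hi
        by_cases hc : s ≤ i
        · have hPge : P s ≤ P i := hPle s i hs1 hc hi2
          rw [if_pos hc, min_eq_left (le_trans hp0a.le hPge), min_eq_left hPge]
          ring
        · have hile : i ≤ s - 1 := by omega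
          have hLge : P i ≤ L := by
            have hne : ¬ s = 1 := by omega
            simp only [hLdef, if_neg hne]
            exact hPle i (s - 1) hi1 hile (by omega)
          rw [if_neg hc, min_eq_right (le_trans hLge hp0b.le),
            min_eq_right (hPle i s hi1 (by omega) hsS)]
          ring
      have hdiff : (∑ i ∈ Finset.Icc 1 S, ρ i * min p0 (P i))
          - (∑ i ∈ Finset.Icc 1 S, ρ i * min (P s) (P i))
          = (∑ i ∈ Finset.Icc s S, ρ i) * (p0 - P s) := by
        rw [← Finset.sum_sub_distrib]
        rw [Finset.sum_congr rfl hterm, ← Finset.sum_filter, hfil1, Finset.sum_mul]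
      have hO := hopt p0 ⟨hp0c, hp0d⟩
      rw [hZ, hZ] at hO
      nlinarith [hO, hdiff, hp0a, hb]
  · rintro ⟨hlo, hhi⟩ p ⟨hp0, hpPh⟩
    rw [hZ, hZ]
    rcases le_total p (P s) with hc | hc
    · -- p ≤ P s : use upper bound on lam
      have hterm : ∀ i ∈ Finset.Icc 1 S,
          ρ i * min p (P i) - ρ i * min (P s) (P i)
            ≤ if s ≤ i then ρ i * (p - P s) else 0 := by
        intro i hi
        obtain ⟨hi1, hi2⟩ := Finset.mem_Icc.mp hi
        by_cases hcc : s ≤ i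
        · have hPge : P s ≤ P i := hPle s i hs1 hcc hi2
          rw [if_pos hcc, min_eq_left (le_trans hc hPge), min_eq_left hPge]
          nlinarith [hρ i hi]
        · have h1 : P i ≤ P s := hPle i s hi1 (by omega) hsS
          rw [if_neg hcc, min_eq_right h1]
          have : min p (P i) ≤ P i := min_le_right _ _
          nlinarith [hρ i hi]
      have hdiff : (∑ i ∈ Finset.Icc 1 S, ρ i * min p (P i))
          - (∑ i ∈ Finset.Icc 1 S, ρ i * min (P s) (P i))
          ≤ (∑ i ∈ Finset.Icc s S, ρ i) * (p - P s) := by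
        rw [← Finset.sum_sub_distrib]
        calc ∑ i ∈ Finset.Icc 1 S, (ρ i * min p (P i) - ρ i * min (P s) (P i))
            ≤ ∑ i ∈ Finset.Icc 1 S, (if s ≤ i then ρ i * (p - P s) else 0) :=
              Finset.sum_le_sum hterm
          _ = (∑ i ∈ Finset.Icc s S, ρ i) * (p - P s) := by
              rw [← Finset.sum_filter, hfil1, Finset.sum_mul]
      set σ := ∑ i ∈ Finset.Icc s S, ρ i with hσ
      set X := ∑ i ∈ Finset.Icc 1 S, ρ i * min p (P i) with hX
      set Y := ∑ i ∈ Finset.Icc 1 S, ρ i * min (P s) (P i) with hY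
      nlinarith [hdiff, hb, hhi, hc, mul_le_mul_of_nonneg_left hdiff hb.le,
        mul_nonneg (sub_nonneg.mpr hhi) (sub_nonneg.mpr hc)]
    · -- p ≥ P s : use lower bound on lam
      have hterm : ∀ i ∈ Finset.Icc 1 S,
          ρ i * min p (P i) - ρ i * min (P s) (P i)
            ≤ if s + 1 ≤ i then ρ i * (p - P s) else 0 := by
        intro i hi
        obtain ⟨hi1, hi2⟩ := Finset.mem_Icc.mp hi
        by_cases hcc : s + 1 ≤ i
        · have hPge : P s ≤ P i := hPle s i hs1 (by omega) hi2
          rw [if_pos hcc, min_eq_left hPge]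
          have : min p (P i) ≤ p := min_le_left _ _
          nlinarith [hρ i hi]
        · have h1 : P i ≤ P s := hPle i s hi1 (by omega) hsS
          rw [if_neg hcc, min_eq_right (le_trans h1 hc), min_eq_right h1]
          nlinarith [hρ i hi]
      have hdiff : (∑ i ∈ Finset.Icc 1 S, ρ i * min p (P i))
          - (∑ i ∈ Finset.Icc 1 S, ρ i * min (P s) (P i))
          ≤ (∑ i ∈ Finset.Icc (s + 1) S, ρ i) * (p - P s) := by
        rw [← Finset.sum_sub_distrib]
        calc ∑ i ∈ Finset.Icc 1 S, (ρ i * min p (P i) - ρ i * min (P s) (P i))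
            ≤ ∑ i ∈ Finset.Icc 1 S, (if s + 1 ≤ i then ρ i * (p - P s) else 0) :=
              Finset.sum_le_sum hterm
          _ = (∑ i ∈ Finset.Icc (s + 1) S, ρ i) * (p - P s) := by
              rw [← Finset.sum_filter, hfil2, Finset.sum_mul]
      set σ := ∑ i ∈ Finset.Icc (s + 1) S, ρ i with hσ
      set X := ∑ i ∈ Finset.Icc 1 S, ρ i * min p (P i) with hX
      set Y := ∑ i ∈ Finset.Icc 1 S, ρ i * min (P s) (P i) with hY
      nlinarith [hdiff, hb, hlo, hc, mul_le_mul_of_nonneg_left hdiff hb.le,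
        mul_nonneg (sub_nonneg.mpr hlo) (sub_nonneg.mpr hc)]
end

section
/- Set P_0 := 0 and P_{S+1} := P_h, and for s ∈ {1,…,S+1} define the step price c_s := η·π_gray + η·π_green·Σ_{i = s}^{S} ρ_i (so c_{S+1} = η·π_gray). If λ = c_s for some s ∈ {1,…,S+1}, then every quantity p in the open interval (P_{s−1}, P_s) is optimal (maximizes Z over [0, P_h]). -/
/-- extending the scenarios by P_0 := 0 and P_{S+1} := P_h and defining the
step prices c_s := η·π_gray + η·π_green·Σ_{i=s}^S ρ_i for s ∈ {1,…,S+1}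
(so c_{S+1} = η·π_gray), if λ = c_s then every quantity p in the open interval
(P_{s−1}, P_s) maximizes Z over [0, P_h]. -/
theorem stmt_9 (S : ℕ) (hS : 1 ≤ S) (ρ P : ℕ → ℝ) (Ph eta pgray pgreen lam : ℝ)
    (hρ : ∀ s ∈ Finset.Icc 1 S, 0 < ρ s)
    (hsum : ∑ s ∈ Finset.Icc 1 S, ρ s = 1)
    (hP1 : 0 ≤ P 1)
    (hmono : ∀ s t : ℕ, 1 ≤ s → s < t → t ≤ S → P s < P t)
    (hPS : P S ≤ Ph)
    (hPh : 0 < Ph) (heta : 0 < eta) (hgray : 0 < pgray) (hgreen : 0 < pgreen)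
    (hPzero : P 0 = 0) (hPtop : P (S + 1) = Ph) :
    ∀ s : ℕ, 1 ≤ s → s ≤ S + 1 →
      lam = eta * pgray + eta * pgreen * ∑ i ∈ Finset.Icc s S, ρ i →
      ∀ p : ℝ, P (s - 1) < p → p < P s →
        ∀ q ∈ Set.Icc (0 : ℝ) Ph,
          Z S ρ P eta pgray pgreen lam q ≤ Z S ρ P eta pgray pgreen lam p := by
  intro s hs1 hs2 hlam p hp1 hp2 q _
  have hsub : Finset.Icc s S = (Finset.Icc 1 S).filter (fun i => s ≤ i) := by
    ext i; simp only [Finset.mem_Icc, Finset.mem_filter]; omega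
  have key : ∀ r : ℝ, Z S ρ P eta pgray pgreen lam r
      = eta * pgreen *
        ∑ i ∈ Finset.Icc 1 S, ρ i * (min r (P i) - (if s ≤ i then r else 0)) := by
    intro r
    have e1 : ∑ i ∈ Finset.Icc 1 S, ρ i * (min r (P i) - (if s ≤ i then r else 0))
        = (∑ i ∈ Finset.Icc 1 S, ρ i * min r (P i))
          - (∑ i ∈ Finset.Icc s S, ρ i) * r := by
      simp_rw [mul_sub]
      rw [Finset.sum_sub_distrib]
      congr 1
      rw [hsub, Finset.sum_filter, Finset.sum_mul]
      refine Finset.sum_congr rfl fun i _ => ?_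
      split <;> ring
    have e2 : ∑ i ∈ Finset.Icc 1 S, ρ i * (eta * pgray * r + eta * pgreen * min r (P i))
        = eta * pgray * r + eta * pgreen * ∑ i ∈ Finset.Icc 1 S, ρ i * min r (P i) := by
      simp_rw [mul_add]
      rw [Finset.sum_add_distrib]
      congr 1
      · rw [← Finset.sum_mul, hsum, one_mul]
      · rw [Finset.mul_sum]
        exact Finset.sum_congr rfl fun i _ => by ring
    unfold Z
    rw [e2, e1, hlam]
    ring
  rw [key q, key p]
  apply mul_le_mul_of_nonneg_left _ (by positivity : (0:ℝ) ≤ eta * pgreen)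
  apply Finset.sum_le_sum
  intro i hi
  obtain ⟨hi1, hi2⟩ := Finset.mem_Icc.mp hi
  apply mul_le_mul_of_nonneg_left _ (hρ i hi).le
  by_cases hsi : s ≤ i
  · have hPi : P s ≤ P i := by
      rcases eq_or_lt_of_le hsi with h | h
      · rw [h]
      · exact (hmono s i hs1 h hi2).le
    have hple : p ≤ P i := le_trans hp2.le hPi
    simp only [if_pos hsi]
    rw [min_eq_left hple]
    have := min_le_left q (P i)
    linarith
  · have hile : i ≤ s - 1 := by omega
    have hPi : P i ≤ P (s - 1) := by
      rcases eq_or_lt_of_le hile with h | h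
      · rw [h]
      · exact (hmono i (s - 1) hi1 h (by omega)).le
    have hPip : P i ≤ p := le_trans hPi hp1.le
    simp only [if_neg hsi, sub_zero]
    rw [min_eq_right hPip]
    exact min_le_right q (P i)
end

section
/- Let s ∈ {1,…,S} with 0 < P_s < P_h. If η·π_gray + η·π_green·Σ_{i = s+1}^{S} ρ_i < λ < η·π_gray + η·π_green·Σ_{i = s}^{S} ρ_i, then p = P_s is the unique maximizer of Z over [0, P_h]. -/
lemma Z_eq (S : ℕ) (ρ P : ℕ → ℝ) (eta pgray pgreen lam q : ℝ)
    (hsum : ∑ s ∈ Finset.Icc 1 S, ρ s = 1) :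
    Z S ρ P eta pgray pgreen lam q =
      (eta * pgray - lam) * q +
        eta * pgreen * ∑ i ∈ Finset.Icc 1 S, ρ i * min q (P i) := by
  unfold Z
  have h1 : ∑ i ∈ Finset.Icc 1 S, ρ i * (eta * pgray * q + eta * pgreen * min q (P i))
      = (∑ i ∈ Finset.Icc 1 S, ρ i) * (eta * pgray * q)
        + eta * pgreen * ∑ i ∈ Finset.Icc 1 S, ρ i * min q (P i) := by
    rw [Finset.sum_mul, Finset.mul_sum, ← Finset.sum_add_distrib]
    exact Finset.sum_congr rfl fun i _ => by ring
  rw [h1, hsum]; ring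

lemma filter_Icc (S s a : ℕ) (ha : 1 ≤ a) :
    (Finset.Icc 1 S).filter (fun i => a ≤ i) = Finset.Icc a S := by
  ext i; simp [Finset.mem_filter, Finset.mem_Icc]; omega

/-- for a scenario index s with 0 < P_s < P_h, if
η·π_gray + η·π_green·Σ_{i=s+1}^S ρ_i < λ < η·π_gray + η·π_green·Σ_{i=s}^S ρ_i, then
p = P_s is the unique maximizer of Z over [0, P_h]. -/
theorem stmt_10 (S : ℕ) (hS : 1 ≤ S) (ρ P : ℕ → ℝ) (Ph eta pgray pgreen lam : ℝ)
    (hρ : ∀ s ∈ Finset.Icc 1 S, 0 < ρ s)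
    (hsum : ∑ s ∈ Finset.Icc 1 S, ρ s = 1)
    (hP1 : 0 ≤ P 1)
    (hmono : ∀ s t : ℕ, 1 ≤ s → s < t → t ≤ S → P s < P t)
    (hPS : P S ≤ Ph)
    (hPh : 0 < Ph) (heta : 0 < eta) (hgray : 0 < pgray) (hgreen : 0 < pgreen)
    (s : ℕ) (hs : s ∈ Finset.Icc 1 S) (hPs0 : 0 < P s) (hPsh : P s < Ph)
    (hlow : eta * pgray + eta * pgreen * ∑ i ∈ Finset.Icc (s + 1) S, ρ i < lam)
    (hhigh : lam < eta * pgray + eta * pgreen * ∑ i ∈ Finset.Icc s S, ρ i) :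
    (∀ p ∈ Set.Icc (0 : ℝ) Ph,
        Z S ρ P eta pgray pgreen lam p ≤ Z S ρ P eta pgray pgreen lam (P s))
    ∧ ∀ p ∈ Set.Icc (0 : ℝ) Ph,
        (∀ q ∈ Set.Icc (0 : ℝ) Ph,
          Z S ρ P eta pgray pgreen lam q ≤ Z S ρ P eta pgray pgreen lam p) →
        p = P s := by
  obtain ⟨hs1, hs2⟩ := Finset.mem_Icc.mp hs
  -- key strict lemma
  have key : ∀ p ∈ Set.Icc (0 : ℝ) Ph, p ≠ P s →
      Z S ρ P eta pgray pgreen lam p < Z S ρ P eta pgray pgreen lam (P s) := by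
    intro p hp hne
    rw [Z_eq S ρ P eta pgray pgreen lam p hsum, Z_eq S ρ P eta pgray pgreen lam (P s) hsum]
    rcases lt_or_gt_of_ne hne with hlt | hgt
    · -- p < P s
      have hterms : ∑ i ∈ Finset.Icc 1 S, (if s ≤ i then ρ i * (P s - p) else 0)
          ≤ ∑ i ∈ Finset.Icc 1 S, (ρ i * min (P s) (P i) - ρ i * min p (P i)) := by
        apply Finset.sum_le_sum
        intro i hi
        obtain ⟨hi1, hi2⟩ := Finset.mem_Icc.mp hi
        by_cases hsi : s ≤ i
        · have hPsi : P s ≤ P i := by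
            rcases eq_or_lt_of_le hsi with h | h
            · rw [h]
            · exact le_of_lt (hmono s i hs1 h hi2)
          rw [if_pos hsi, min_eq_left hPsi, min_eq_left (le_trans hlt.le hPsi)]
          ring_nf; exact le_refl _
        · rw [if_neg hsi]
          have hPis : P i < P s := hmono i s hi1 (Nat.lt_of_not_le hsi) hs2
          rw [min_eq_right hPis.le]
          have : min p (P i) ≤ P i := min_le_right _ _
          nlinarith [(hρ i hi).le]
      have hleft : ∑ i ∈ Finset.Icc 1 S, (if s ≤ i then ρ i * (P s - p) else 0)
          = (∑ i ∈ Finset.Icc s S, ρ i) * (P s - p) := by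
        rw [Finset.sum_ite, Finset.sum_const_zero, add_zero, filter_Icc S s s hs1,
          Finset.sum_mul]
      rw [hleft, Finset.sum_sub_distrib] at hterms
      have h1 := mul_le_mul_of_nonneg_left hterms (mul_pos heta hgreen).le
      have h2 : 0 < (eta * pgray + eta * pgreen * ∑ i ∈ Finset.Icc s S, ρ i - lam)
          * (P s - p) := mul_pos (by linarith) (sub_pos.mpr hlt)
      nlinarith [h1, h2]
    · -- p > P s
      have hterms : ∑ i ∈ Finset.Icc 1 S, (if s + 1 ≤ i then ρ i * (P s - p) else 0)
          ≤ ∑ i ∈ Finset.Icc 1 S, (ρ i * min (P s) (P i) - ρ i * min p (P i)) := by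
        apply Finset.sum_le_sum
        intro i hi
        obtain ⟨hi1, hi2⟩ := Finset.mem_Icc.mp hi
        by_cases hsi : s + 1 ≤ i
        · have hPsi : P s < P i := hmono s i hs1 hsi hi2
          rw [if_pos hsi, min_eq_left hPsi.le]
          have h1 : min p (P i) ≤ p := min_le_left _ _
          nlinarith [(hρ i hi).le]
        · have his : i ≤ s := by omega
          have hPis : P i ≤ P s := by
            rcases eq_or_lt_of_le his with h | h
            · rw [h]
            · exact le_of_lt (hmono i s hi1 h hs2)
          rw [if_neg hsi, min_eq_right hPis, min_eq_right (le_trans hPis hgt.le)]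
          simp
      have hleft : ∑ i ∈ Finset.Icc 1 S, (if s + 1 ≤ i then ρ i * (P s - p) else 0)
          = (∑ i ∈ Finset.Icc (s + 1) S, ρ i) * (P s - p) := by
        rw [Finset.sum_ite, Finset.sum_const_zero, add_zero,
          filter_Icc S s (s + 1) (by omega), Finset.sum_mul]
      rw [hleft, Finset.sum_sub_distrib] at hterms
      have h1 := mul_le_mul_of_nonneg_left hterms (mul_pos heta hgreen).le
      have h2 : 0 < (lam - eta * pgray - eta * pgreen * ∑ i ∈ Finset.Icc (s + 1) S, ρ i)
          * (p - P s) := mul_pos (by linarith) (sub_pos.mpr hgt)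
      nlinarith [h1, h2]
  have hmem : P s ∈ Set.Icc (0 : ℝ) Ph := ⟨hPs0.le, hPsh.le⟩
  constructor
  · intro p hp
    by_cases h : p = P s
    · rw [h]
    · exact (key p hp h).le
  · intro p hp hmax
    by_contra h
    exact absurd (hmax (P s) hmem) (not_le.mpr (key p hp h))
end
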